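/- arXiv:2512.03860 — 5 statements merged into one kernel-verified Lean document; each statement's English description precedes it below -/
import Mathlib

section
/- Suppose ξ satisfies the standard-deformation equation. Define [x,y]^ξ := pr_a([I_ξ(x), I_ξ(y)]) for x,y ∈ a⊗𝒜. Then [·,·]^ξ is an 𝒜-bilinear alternating bracket on a⊗𝒜 satisfying the Jacobi identity [x,[y,z]^ξ]^ξ = [[x,y]^ξ,z]^ξ + [y,[x,z]^ξ]^ξ for all x,y,z ∈ a⊗𝒜, so that (a⊗𝒜, [·,·]^ξ) is an 𝒜-Lie algebra; moreover I_ξ([x,y]^ξ) = [I_ξ(x), I_ξ(y)] for all x,y, i.e., I_ξ is an injective morphism of 𝒜-Lie algebras into l⊗𝒜. -/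
open TensorProduct

noncomputable section

/-- The evaluation map id_V ⊗ ev : 𝒜 ⊗[K] V → V induced by ev : 𝒜 → K. -/
def evMap (K 𝒜 : Type) [Field K] [CommRing 𝒜] [Algebra K 𝒜]
    (ev : 𝒜 →ₐ[K] K) (V : Type) [AddCommGroup V] [Module K V] :
    𝒜 ⊗[K] V →ₗ[K] V :=
  (TensorProduct.lid K V).toLinearMap ∘ₗ LinearMap.rTensor V ev.toLinearMap

variable {K : Type} [Field K]
  {l : Type} [LieRing l] [LieAlgebra K l]
  {a : Type} [LieRing a] [LieAlgebra K a]
  {b : Type} [AddCommGroup b] [Module K b]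

/-- The map I_ξ := i + j∘ξ : a⊗𝒜 → l⊗𝒜. -/
def IxiMap (𝒜 : Type) [CommRing 𝒜] [Algebra K 𝒜]
    (i : a →ₗ⁅K⁆ l) (j : b →ₗ[K] l)
    (ξ : 𝒜 ⊗[K] a →ₗ[𝒜] 𝒜 ⊗[K] b) : 𝒜 ⊗[K] a →ₗ[𝒜] 𝒜 ⊗[K] l :=
  LinearMap.baseChange 𝒜 i.toLinearMap + (LinearMap.baseChange 𝒜 j) ∘ₗ ξ

/-- The standard-deformation equation for ξ:
I_ξ(pr_a [I_ξ x, I_ξ y]) = [I_ξ x, I_ξ y] for all x, y ∈ a⊗𝒜. -/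
def StdEq (𝒜 : Type) [CommRing 𝒜] [Algebra K 𝒜]
    (i : a →ₗ⁅K⁆ l) (j : b →ₗ[K] l) (prA : l →ₗ[K] a)
    (ξ : 𝒜 ⊗[K] a →ₗ[𝒜] 𝒜 ⊗[K] b) : Prop :=
  ∀ x y : 𝒜 ⊗[K] a,
    IxiMap 𝒜 i j ξ ((LinearMap.baseChange 𝒜 prA) ⁅IxiMap 𝒜 i j ξ x, IxiMap 𝒜 i j ξ y⁆)
      = ⁅IxiMap 𝒜 i j ξ x, IxiMap 𝒜 i j ξ y⁆

/- STATEMENT 6: If ξ satisfies the standard-deformation equation, then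
[x,y]^ξ := pr_a([I_ξ x, I_ξ y]) is an 𝒜-bilinear alternating bracket on a⊗𝒜
satisfying the (Leibniz-form) Jacobi identity, I_ξ is bracket-preserving for it,
and I_ξ is injective. -/
theorem stmt_6
    {𝒜 : Type} [CommRing 𝒜] [Algebra K 𝒜]
    (ev : 𝒜 →ₐ[K] K) (n : ℕ) (hnil : (RingHom.ker ev.toRingHom) ^ (n + 1) = ⊥)
    (i : a →ₗ⁅K⁆ l) (hi : Function.Injective i)
    (j : b →ₗ[K] l) (prA : l →ₗ[K] a) (prB : l →ₗ[K] b)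
    (hpi : ∀ x : a, prA (i x) = x) (hpj : ∀ w : b, prB (j w) = w)
    (hpaj : ∀ w : b, prA (j w) = 0) (hpbi : ∀ x : a, prB (i x) = 0)
    (hsplit : ∀ u : l, i (prA u) + j (prB u) = u)
    (ξ : 𝒜 ⊗[K] a →ₗ[𝒜] 𝒜 ⊗[K] b)
    (hξm : ∀ x : 𝒜 ⊗[K] a, ξ x ∈ LinearMap.ker (evMap K 𝒜 ev b))
    (hstd : StdEq 𝒜 i j prA ξ) :
    (∀ x : 𝒜 ⊗[K] a,
      (LinearMap.baseChange 𝒜 prA) ⁅IxiMap 𝒜 i j ξ x, IxiMap 𝒜 i j ξ x⁆ = 0) ∧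
    (∀ x y z : 𝒜 ⊗[K] a,
      (LinearMap.baseChange 𝒜 prA) ⁅IxiMap 𝒜 i j ξ x,
        IxiMap 𝒜 i j ξ ((LinearMap.baseChange 𝒜 prA)
          ⁅IxiMap 𝒜 i j ξ y, IxiMap 𝒜 i j ξ z⁆)⁆
      = (LinearMap.baseChange 𝒜 prA) ⁅IxiMap 𝒜 i j ξ ((LinearMap.baseChange 𝒜 prA)
            ⁅IxiMap 𝒜 i j ξ x, IxiMap 𝒜 i j ξ y⁆), IxiMap 𝒜 i j ξ z⁆
        + (LinearMap.baseChange 𝒜 prA) ⁅IxiMap 𝒜 i j ξ y,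
            IxiMap 𝒜 i j ξ ((LinearMap.baseChange 𝒜 prA)
              ⁅IxiMap 𝒜 i j ξ x, IxiMap 𝒜 i j ξ z⁆)⁆) ∧
    (∀ x y : 𝒜 ⊗[K] a,
      IxiMap 𝒜 i j ξ ((LinearMap.baseChange 𝒜 prA) ⁅IxiMap 𝒜 i j ξ x, IxiMap 𝒜 i j ξ y⁆)
        = ⁅IxiMap 𝒜 i j ξ x, IxiMap 𝒜 i j ξ y⁆) ∧
    Function.Injective (IxiMap 𝒜 i j ξ) := by
  refine ⟨fun x => by simp, fun x y z => ?_, hstd, ?_⟩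
  · rw [hstd y z, hstd x y, hstd x z, leibniz_lie, map_add]
  · have hleft : ∀ x : 𝒜 ⊗[K] a,
        (LinearMap.baseChange 𝒜 prA) (IxiMap 𝒜 i j ξ x) = x := by
      intro x
      have h1 : prA ∘ₗ (i : a →ₗ[K] l) = LinearMap.id := by
        ext u; simp [hpi]
      have h2 : prA ∘ₗ j = 0 := by ext w; simp [hpaj]
      have e1 : (LinearMap.baseChange 𝒜 prA) ((LinearMap.baseChange 𝒜 (i : a →ₗ[K] l)) x) = x := by
        rw [← LinearMap.comp_apply, ← LinearMap.baseChange_comp, h1, LinearMap.baseChange_id]; rfl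
      have e2 : (LinearMap.baseChange 𝒜 prA) ((LinearMap.baseChange 𝒜 j) (ξ x)) = 0 := by
        rw [← LinearMap.comp_apply, ← LinearMap.baseChange_comp, h2]
        simp
      simp only [IxiMap, LinearMap.add_apply, LinearMap.coe_comp, Function.comp_apply, map_add,
        e1, e2, add_zero]
    intro x y hxy
    have := congrArg (LinearMap.baseChange 𝒜 prA) hxy
    rwa [hleft x, hleft y] at this
end
end

section
/- Suppose a⊗𝒜 carries an 𝒜-bilinear Lie bracket [·,·]′ such that I_ξ([x,y]′) = [I_ξ(x), I_ξ(y)] for all x,y ∈ a⊗𝒜. Then [x,y]′ = pr_a([I_ξ(x), I_ξ(y)]) for all x,y ∈ a⊗𝒜, and ξ satisfies the standard-deformation equation. -/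
open TensorProduct

noncomputable section

variable {K : Type} [Field K]
  {l : Type} [LieRing l] [LieAlgebra K l]
  {a : Type} [LieRing a] [LieAlgebra K a]
  {b : Type} [AddCommGroup b] [Module K b]

/- STATEMENT 7: If a⊗𝒜 carries an 𝒜-bilinear Lie bracket B' with
I_ξ(B' x y) = [I_ξ x, I_ξ y], then B' x y = pr_a([I_ξ x, I_ξ y]) for all x, y,
and ξ satisfies the standard-deformation equation. -/
theorem stmt_7
    {𝒜 : Type} [CommRing 𝒜] [Algebra K 𝒜]
    (ev : 𝒜 →ₐ[K] K) (n : ℕ) (hnil : (RingHom.ker ev.toRingHom) ^ (n + 1) = ⊥)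
    (i : a →ₗ⁅K⁆ l) (hi : Function.Injective i)
    (j : b →ₗ[K] l) (prA : l →ₗ[K] a) (prB : l →ₗ[K] b)
    (hpi : ∀ x : a, prA (i x) = x) (hpj : ∀ w : b, prB (j w) = w)
    (hpaj : ∀ w : b, prA (j w) = 0) (hpbi : ∀ x : a, prB (i x) = 0)
    (hsplit : ∀ u : l, i (prA u) + j (prB u) = u)
    (ξ : 𝒜 ⊗[K] a →ₗ[𝒜] 𝒜 ⊗[K] b)
    (hξm : ∀ x : 𝒜 ⊗[K] a, ξ x ∈ LinearMap.ker (evMap K 𝒜 ev b))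
    (B' : 𝒜 ⊗[K] a →ₗ[𝒜] 𝒜 ⊗[K] a →ₗ[𝒜] 𝒜 ⊗[K] a)
    (halt : ∀ x : 𝒜 ⊗[K] a, B' x x = 0)
    (hjac : ∀ x y z : 𝒜 ⊗[K] a,
      B' x (B' y z) = B' (B' x y) z + B' y (B' x z))
    (hcomp : ∀ x y : 𝒜 ⊗[K] a,
      IxiMap 𝒜 i j ξ (B' x y) = ⁅IxiMap 𝒜 i j ξ x, IxiMap 𝒜 i j ξ y⁆) :
    (∀ x y : 𝒜 ⊗[K] a,
      B' x y = (LinearMap.baseChange 𝒜 prA) ⁅IxiMap 𝒜 i j ξ x, IxiMap 𝒜 i j ξ y⁆) ∧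
    StdEq 𝒜 i j prA ξ := by
  have hpi' : prA ∘ₗ i.toLinearMap = LinearMap.id := LinearMap.ext hpi
  have hpaj' : prA ∘ₗ j = 0 := LinearMap.ext hpaj
  have hretr : ∀ z : 𝒜 ⊗[K] a,
      (LinearMap.baseChange 𝒜 prA) (IxiMap 𝒜 i j ξ z) = z := by
    intro z
    simp only [IxiMap, LinearMap.add_apply, LinearMap.coe_comp, Function.comp_apply, map_add]
    have h1 : (LinearMap.baseChange 𝒜 prA) ∘ₗ (LinearMap.baseChange 𝒜 i.toLinearMap)
        = LinearMap.id := by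
      rw [← LinearMap.baseChange_comp, hpi', LinearMap.baseChange_id]
    have h2 : (LinearMap.baseChange 𝒜 prA) ∘ₗ (LinearMap.baseChange 𝒜 j) = 0 := by
      rw [← LinearMap.baseChange_comp, hpaj']; ext; simp
    calc (LinearMap.baseChange 𝒜 prA) ((LinearMap.baseChange 𝒜 i.toLinearMap) z)
          + (LinearMap.baseChange 𝒜 prA) ((LinearMap.baseChange 𝒜 j) (ξ z))
        = LinearMap.id z + (0 : 𝒜 ⊗[K] b →ₗ[𝒜] 𝒜 ⊗[K] a) (ξ z) := by
          rw [← LinearMap.comp_apply, ← LinearMap.comp_apply, h1, h2]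
      _ = z := by simp
  have key : ∀ x y : 𝒜 ⊗[K] a,
      B' x y = (LinearMap.baseChange 𝒜 prA) ⁅IxiMap 𝒜 i j ξ x, IxiMap 𝒜 i j ξ y⁆ := by
    intro x y
    rw [← hcomp, hretr]
  refine ⟨key, fun x y => ?_⟩
  rw [← key, hcomp]
end
end

section
/- For all a₁, a₂ ∈ a one has the identity j(pr_b[i(a₁), j(ξ(a₂))] − pr_b[i(a₂), j(ξ(a₁))] − ξ([a₁,a₂]) + pr_b[j(ξ(a₁)), j(ξ(a₂))] − ξ(pr_a[j(ξ(a₁)), i(a₂)]) − ξ(pr_a[i(a₁), j(ξ(a₂))]) − ξ(pr_a[j(ξ(a₁)), j(ξ(a₂))])) = [I_ξ(a₁), I_ξ(a₂)] − I_ξ(pr_a[I_ξ(a₁), I_ξ(a₂)]). Consequently, ξ satisfies the standard-deformation equation if and only if ξ satisfies the Maurer–Cartan equation. -/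
open TensorProduct

noncomputable section

variable {K : Type} [Field K]
  {l : Type} [LieRing l] [LieAlgebra K l]
  {a : Type} [LieRing a] [LieAlgebra K a]
  {b : Type} [AddCommGroup b] [Module K b]

/-- The Maurer–Cartan expression for ξ evaluated at a₁, a₂ ∈ a (viewed in a⊗𝒜 via
a ↦ 1 ⊗ a). -/
def mcTerm (𝒜 : Type) [CommRing 𝒜] [Algebra K 𝒜]
    (i : a →ₗ⁅K⁆ l) (j : b →ₗ[K] l) (prA : l →ₗ[K] a) (prB : l →ₗ[K] b)
    (ξ : 𝒜 ⊗[K] a →ₗ[𝒜] 𝒜 ⊗[K] b) (a₁ a₂ : a) : 𝒜 ⊗[K] b :=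
  (LinearMap.baseChange 𝒜 prB)
      ⁅LinearMap.baseChange 𝒜 i.toLinearMap ((1 : 𝒜) ⊗ₜ[K] a₁),
        LinearMap.baseChange 𝒜 j (ξ ((1 : 𝒜) ⊗ₜ[K] a₂))⁆
  - (LinearMap.baseChange 𝒜 prB)
      ⁅LinearMap.baseChange 𝒜 i.toLinearMap ((1 : 𝒜) ⊗ₜ[K] a₂),
        LinearMap.baseChange 𝒜 j (ξ ((1 : 𝒜) ⊗ₜ[K] a₁))⁆
  - ξ ((1 : 𝒜) ⊗ₜ[K] ⁅a₁, a₂⁆)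
  + (LinearMap.baseChange 𝒜 prB)
      ⁅LinearMap.baseChange 𝒜 j (ξ ((1 : 𝒜) ⊗ₜ[K] a₁)),
        LinearMap.baseChange 𝒜 j (ξ ((1 : 𝒜) ⊗ₜ[K] a₂))⁆
  - ξ ((LinearMap.baseChange 𝒜 prA)
      ⁅LinearMap.baseChange 𝒜 j (ξ ((1 : 𝒜) ⊗ₜ[K] a₁)),
        LinearMap.baseChange 𝒜 i.toLinearMap ((1 : 𝒜) ⊗ₜ[K] a₂)⁆)
  - ξ ((LinearMap.baseChange 𝒜 prA)
      ⁅LinearMap.baseChange 𝒜 i.toLinearMap ((1 : 𝒜) ⊗ₜ[K] a₁),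
        LinearMap.baseChange 𝒜 j (ξ ((1 : 𝒜) ⊗ₜ[K] a₂))⁆)
  - ξ ((LinearMap.baseChange 𝒜 prA)
      ⁅LinearMap.baseChange 𝒜 j (ξ ((1 : 𝒜) ⊗ₜ[K] a₁)),
        LinearMap.baseChange 𝒜 j (ξ ((1 : 𝒜) ⊗ₜ[K] a₂))⁆)

/- STATEMENT 8: the identity j(mcTerm a₁ a₂) = [I_ξ a₁, I_ξ a₂] − I_ξ(pr_a[I_ξ a₁, I_ξ a₂]),
and consequently: ξ satisfies the standard-deformation equation iff it satisfies the
Maurer–Cartan equation. -/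
theorem stmt_8
    {𝒜 : Type} [CommRing 𝒜] [Algebra K 𝒜]
    (ev : 𝒜 →ₐ[K] K) (n : ℕ) (hnil : (RingHom.ker ev.toRingHom) ^ (n + 1) = ⊥)
    (i : a →ₗ⁅K⁆ l) (hi : Function.Injective i)
    (j : b →ₗ[K] l) (prA : l →ₗ[K] a) (prB : l →ₗ[K] b)
    (hpi : ∀ x : a, prA (i x) = x) (hpj : ∀ w : b, prB (j w) = w)
    (hpaj : ∀ w : b, prA (j w) = 0) (hpbi : ∀ x : a, prB (i x) = 0)
    (hsplit : ∀ u : l, i (prA u) + j (prB u) = u)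
    (ξ : 𝒜 ⊗[K] a →ₗ[𝒜] 𝒜 ⊗[K] b)
    (hξm : ∀ x : 𝒜 ⊗[K] a, ξ x ∈ LinearMap.ker (evMap K 𝒜 ev b)) :
    (∀ a₁ a₂ : a,
      LinearMap.baseChange 𝒜 j (mcTerm 𝒜 i j prA prB ξ a₁ a₂)
        = ⁅IxiMap 𝒜 i j ξ ((1 : 𝒜) ⊗ₜ[K] a₁), IxiMap 𝒜 i j ξ ((1 : 𝒜) ⊗ₜ[K] a₂)⁆
          - IxiMap 𝒜 i j ξ ((LinearMap.baseChange 𝒜 prA)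
              ⁅IxiMap 𝒜 i j ξ ((1 : 𝒜) ⊗ₜ[K] a₁), IxiMap 𝒜 i j ξ ((1 : 𝒜) ⊗ₜ[K] a₂)⁆)) ∧
    (StdEq 𝒜 i j prA ξ ↔ ∀ a₁ a₂ : a, mcTerm 𝒜 i j prA prB ξ a₁ a₂ = 0) := by
  set i' := LinearMap.baseChange 𝒜 i.toLinearMap with hi'def
  set j' := LinearMap.baseChange 𝒜 j with hj'def
  set pA := LinearMap.baseChange 𝒜 prA with hpAdef
  set pB := LinearMap.baseChange 𝒜 prB with hpBdef
  set I := IxiMap 𝒜 i j ξ with hIdef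
  have hI : ∀ x : 𝒜 ⊗[K] a, I x = i' x + j' (ξ x) := by
    intro x; simp [hIdef, IxiMap, hi'def, hj'def]
  have hpA_i : ∀ x : 𝒜 ⊗[K] a, pA (i' x) = x := by
    intro x
    have h : prA ∘ₗ i.toLinearMap = LinearMap.id := LinearMap.ext hpi
    rw [hpAdef, hi'def, ← LinearMap.comp_apply, ← LinearMap.baseChange_comp, h,
      LinearMap.baseChange_id, LinearMap.id_apply]
  have hpB_j : ∀ w : 𝒜 ⊗[K] b, pB (j' w) = w := by
    intro w
    have h : prB ∘ₗ j = LinearMap.id := LinearMap.ext hpj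
    rw [hpBdef, hj'def, ← LinearMap.comp_apply, ← LinearMap.baseChange_comp, h,
      LinearMap.baseChange_id, LinearMap.id_apply]
  have hsp : ∀ u : 𝒜 ⊗[K] l, i' (pA u) + j' (pB u) = u := by
    intro u
    have h : i.toLinearMap ∘ₗ prA + j ∘ₗ prB = LinearMap.id := LinearMap.ext hsplit
    have h2 := congrArg (fun f => LinearMap.baseChange 𝒜 f u) h
    simpa [LinearMap.baseChange_add, LinearMap.baseChange_comp, LinearMap.baseChange_id,
      ← hi'def, ← hj'def, ← hpAdef, ← hpBdef] using h2
  -- key identity, for arbitrary x y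
  have key : ∀ x y : 𝒜 ⊗[K] a,
      ⁅I x, I y⁆ - I (pA ⁅I x, I y⁆)
        = j' (pB ⁅I x, I y⁆ - ξ (pA ⁅I x, I y⁆)) := by
    intro x y
    have h2 : i' (pA ⁅I x, I y⁆) = ⁅I x, I y⁆ - j' (pB ⁅I x, I y⁆) :=
      eq_sub_of_add_eq (hsp _)
    rw [hI (pA ⁅I x, I y⁆), map_sub, h2]
    abel
  -- expansion of the bracket at generators
  have hexp : ∀ a₁ a₂ : a,
      pB ⁅I ((1 : 𝒜) ⊗ₜ[K] a₁), I ((1 : 𝒜) ⊗ₜ[K] a₂)⁆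
        - ξ (pA ⁅I ((1 : 𝒜) ⊗ₜ[K] a₁), I ((1 : 𝒜) ⊗ₜ[K] a₂)⁆)
        = mcTerm 𝒜 i j prA prB ξ a₁ a₂ := by
    intro a₁ a₂
    have hii : ⁅i' ((1 : 𝒜) ⊗ₜ[K] a₁), i' ((1 : 𝒜) ⊗ₜ[K] a₂)⁆
        = i' ((1 : 𝒜) ⊗ₜ[K] ⁅a₁, a₂⁆) := by
      rw [hi'def]
      simp only [LinearMap.baseChange_tmul]
      rw [LieAlgebra.ExtendScalars.bracket_tmul, one_mul]
      simp
    have hskew : ⁅j' (ξ ((1 : 𝒜) ⊗ₜ[K] a₁)), i' ((1 : 𝒜) ⊗ₜ[K] a₂)⁆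
        = -⁅i' ((1 : 𝒜) ⊗ₜ[K] a₂), j' (ξ ((1 : 𝒜) ⊗ₜ[K] a₁))⁆ := by
      rw [← lie_skew]
    have hpBii : pB ⁅i' ((1 : 𝒜) ⊗ₜ[K] a₁), i' ((1 : 𝒜) ⊗ₜ[K] a₂)⁆ = 0 := by
      rw [hii, hi'def, hpBdef]
      rw [LinearMap.baseChange_tmul, LinearMap.baseChange_tmul]
      simp only [LieHom.coe_toLinearMap, hpbi, TensorProduct.tmul_zero]
    have hpAii : pA ⁅i' ((1 : 𝒜) ⊗ₜ[K] a₁), i' ((1 : 𝒜) ⊗ₜ[K] a₂)⁆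
        = (1 : 𝒜) ⊗ₜ[K] ⁅a₁, a₂⁆ := by
      rw [hii, hpA_i]
    rw [mcTerm]
    simp only [hI, add_lie, lie_add, map_add, hpBii, hpAii, zero_add,
      ← hi'def, ← hj'def, ← hpAdef, ← hpBdef]
    rw [hskew]
    simp only [map_neg]
    abel
  have part1 : ∀ a₁ a₂ : a,
      j' (mcTerm 𝒜 i j prA prB ξ a₁ a₂)
        = ⁅I ((1 : 𝒜) ⊗ₜ[K] a₁), I ((1 : 𝒜) ⊗ₜ[K] a₂)⁆
          - I (pA ⁅I ((1 : 𝒜) ⊗ₜ[K] a₁), I ((1 : 𝒜) ⊗ₜ[K] a₂)⁆) := by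
    intro a₁ a₂
    rw [← hexp a₁ a₂, ← key]
  refine ⟨part1, ?_, ?_⟩
  · -- StdEq → MC
    intro h a₁ a₂
    have h0 : j' (mcTerm 𝒜 i j prA prB ξ a₁ a₂) = 0 := by
      rw [part1 a₁ a₂, h ((1 : 𝒜) ⊗ₜ[K] a₁) ((1 : 𝒜) ⊗ₜ[K] a₂), sub_self]
    calc mcTerm 𝒜 i j prA prB ξ a₁ a₂
        = pB (j' (mcTerm 𝒜 i j prA prB ξ a₁ a₂)) := (hpB_j _).symm
      _ = pB 0 := by rw [h0]
      _ = 0 := map_zero _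
  · -- MC → StdEq
    intro h
    have base : ∀ a₁ a₂ : a,
        ⁅I ((1 : 𝒜) ⊗ₜ[K] a₁), I ((1 : 𝒜) ⊗ₜ[K] a₂)⁆
          - I (pA ⁅I ((1 : 𝒜) ⊗ₜ[K] a₁), I ((1 : 𝒜) ⊗ₜ[K] a₂)⁆) = 0 := by
      intro a₁ a₂
      rw [← part1 a₁ a₂, h a₁ a₂, map_zero]
    have step1 : ∀ (a₁ : a) (y : 𝒜 ⊗[K] a),
        ⁅I ((1 : 𝒜) ⊗ₜ[K] a₁), I y⁆ - I (pA ⁅I ((1 : 𝒜) ⊗ₜ[K] a₁), I y⁆) = 0 := by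
      intro a₁ y
      induction y using TensorProduct.induction_on with
      | zero => simp
      | tmul c a₂ =>
          have hc : (c ⊗ₜ[K] a₂ : 𝒜 ⊗[K] a) = c • ((1 : 𝒜) ⊗ₜ[K] a₂) := by
            simp [TensorProduct.smul_tmul']
          rw [hc, map_smul]
          rw [lie_smul c (I ((1 : 𝒜) ⊗ₜ[K] a₁)) (I ((1 : 𝒜) ⊗ₜ[K] a₂)),
            map_smul, map_smul, ← smul_sub, base a₁ a₂, smul_zero]
      | add y₁ y₂ h1 h2 =>
          simp only [map_add, lie_add]
          rw [← sub_add_sub_comm, h1, h2, add_zero]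
    have step2 : ∀ x y : 𝒜 ⊗[K] a,
        ⁅I x, I y⁆ - I (pA ⁅I x, I y⁆) = 0 := by
      intro x y
      induction x using TensorProduct.induction_on with
      | zero => simp
      | tmul c a₁ =>
          have hc : (c ⊗ₜ[K] a₁ : 𝒜 ⊗[K] a) = c • ((1 : 𝒜) ⊗ₜ[K] a₁) := by
            simp [TensorProduct.smul_tmul']
          rw [hc, map_smul]
          rw [smul_lie c (I ((1 : 𝒜) ⊗ₜ[K] a₁)) (I y),
            map_smul, map_smul, ← smul_sub, step1 a₁ y, smul_zero]
      | add x₁ x₂ h1 h2 =>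
          simp only [map_add, add_lie]
          rw [← sub_add_sub_comm, h1, h2, add_zero]
    intro x y
    have := step2 x y
    rw [sub_eq_zero] at this
    exact this.symm
end
end

section
/- Let [·,·]′ be an 𝒜-bilinear Lie bracket on a⊗𝒜 and let I : a⊗𝒜 → l⊗𝒜 be an 𝒜-linear map such that I([x,y]′) = [I(x), I(y)] for all x,y ∈ a⊗𝒜 and (id_l⊗ev)(I(a⊗1)) = i(a) for all a ∈ a (i.e., I is an infinitesimal deformation of the Lie pair whose center is the inclusion i). Then: (1) Φ := pr_a∘I : a⊗𝒜 → a⊗𝒜 is bijective; (2) ξ := pr_b∘I∘Φ⁻¹ is an 𝒜-linear map with image contained in b⊗m, and ξ satisfies the standard-deformation equation; (3) I = I_ξ∘Φ; and (4) Φ([x,y]′) = pr_a([I_ξ(Φ(x)), I_ξ(Φ(y))]) for all x,y ∈ a⊗𝒜, so that Φ is a strict isomorphism from the deformation I onto its standard realization I_ξ. -/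
open TensorProduct

noncomputable section

section helpers

variable {K 𝒜 : Type} [Field K] [CommRing 𝒜] [Algebra K 𝒜] (ev : 𝒜 →ₐ[K] K)

lemma evMap_tmul {V : Type} [AddCommGroup V] [Module K V] (c : 𝒜) (v : V) :
    evMap K 𝒜 ev V (c ⊗ₜ[K] v) = ev c • v := by
  simp [evMap]

lemma evMap_smul {V : Type} [AddCommGroup V] [Module K V] (c : 𝒜) (z : 𝒜 ⊗[K] V) :
    evMap K 𝒜 ev V (c • z) = ev c • evMap K 𝒜 ev V z := by
  induction z using TensorProduct.induction_on with
  | zero => simp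
  | tmul d v =>
      rw [TensorProduct.smul_tmul', evMap_tmul, evMap_tmul, smul_eq_mul, map_mul, mul_smul]
  | add x y hx hy => rw [smul_add, map_add, map_add, hx, hy, smul_add]

lemma evMap_baseChange {V W : Type} [AddCommGroup V] [Module K V] [AddCommGroup W]
    [Module K W] (f : V →ₗ[K] W) (z : 𝒜 ⊗[K] V) :
    evMap K 𝒜 ev W (LinearMap.baseChange 𝒜 f z) = f (evMap K 𝒜 ev V z) := by
  induction z using TensorProduct.induction_on with
  | zero => simp
  | tmul d v => rw [LinearMap.baseChange_tmul, evMap_tmul, evMap_tmul, map_smul]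
  | add x y hx hy => simp only [map_add, hx, hy]

lemma mem_smul_of_evMap_eq_zero {V : Type} [AddCommGroup V] [Module K V]
    (z : 𝒜 ⊗[K] V) (h : evMap K 𝒜 ev V z = 0) :
    z ∈ (RingHom.ker ev.toRingHom) • (⊤ : Submodule 𝒜 (𝒜 ⊗[K] V)) := by
  have key : ∀ z : 𝒜 ⊗[K] V, z - (1 : 𝒜) ⊗ₜ[K] (evMap K 𝒜 ev V z)
      ∈ (RingHom.ker ev.toRingHom) • (⊤ : Submodule 𝒜 (𝒜 ⊗[K] V)) := by
    intro z
    induction z using TensorProduct.induction_on with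
    | zero => simpa using Submodule.zero_mem _
    | tmul c v =>
        rw [evMap_tmul]
        have h1 : (1 : 𝒜) ⊗ₜ[K] (ev c • v) = (algebraMap K 𝒜 (ev c)) ⊗ₜ[K] v := by
          rw [← TensorProduct.smul_tmul]
          congr 1
          rw [Algebra.smul_def, mul_one]
        rw [h1]
        have h2 : c ⊗ₜ[K] v - (algebraMap K 𝒜 (ev c)) ⊗ₜ[K] v
            = (c - algebraMap K 𝒜 (ev c)) • ((1 : 𝒜) ⊗ₜ[K] v) := by
          rw [TensorProduct.smul_tmul', smul_eq_mul, mul_one, TensorProduct.sub_tmul]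
        rw [h2]
        refine Submodule.smul_mem_smul ?_ trivial
        rw [RingHom.mem_ker]
        simp [map_sub, AlgHom.commutes]
    | add x y hx hy =>
        have : x + y - (1 : 𝒜) ⊗ₜ[K] (evMap K 𝒜 ev V (x + y))
            = (x - (1 : 𝒜) ⊗ₜ[K] (evMap K 𝒜 ev V x))
              + (y - (1 : 𝒜) ⊗ₜ[K] (evMap K 𝒜 ev V y)) := by
          rw [map_add, TensorProduct.tmul_add]; abel
        rw [this]
        exact Submodule.add_mem _ hx hy
  have := key z
  rw [h] at this
  simpa using this

end helpers

variable {K : Type} [Field K]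
  {l : Type} [LieRing l] [LieAlgebra K l]
  {a : Type} [LieRing a] [LieAlgebra K a]
  {b : Type} [AddCommGroup b] [Module K b]

theorem stmt_9
    {𝒜 : Type} [CommRing 𝒜] [Algebra K 𝒜]
    (ev : 𝒜 →ₐ[K] K) (n : ℕ) (hnil : (RingHom.ker ev.toRingHom) ^ (n + 1) = ⊥)
    (i : a →ₗ⁅K⁆ l) (hi : Function.Injective i)
    (j : b →ₗ[K] l) (prA : l →ₗ[K] a) (prB : l →ₗ[K] b)
    (hpi : ∀ x : a, prA (i x) = x) (hpj : ∀ w : b, prB (j w) = w)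
    (hpaj : ∀ w : b, prA (j w) = 0) (hpbi : ∀ x : a, prB (i x) = 0)
    (hsplit : ∀ u : l, i (prA u) + j (prB u) = u)
    (B' : 𝒜 ⊗[K] a →ₗ[𝒜] 𝒜 ⊗[K] a →ₗ[𝒜] 𝒜 ⊗[K] a)
    (halt : ∀ x : 𝒜 ⊗[K] a, B' x x = 0)
    (hjac : ∀ x y z : 𝒜 ⊗[K] a, B' x (B' y z) = B' (B' x y) z + B' y (B' x z))
    (I : 𝒜 ⊗[K] a →ₗ[𝒜] 𝒜 ⊗[K] l)
    (hIlie : ∀ x y : 𝒜 ⊗[K] a, I (B' x y) = ⁅I x, I y⁆)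
    (hcen : ∀ x : a, evMap K 𝒜 ev l (I ((1 : 𝒜) ⊗ₜ[K] x)) = i x) :
    Function.Bijective ((LinearMap.baseChange 𝒜 prA) ∘ₗ I) ∧
    ∃ Ψ : 𝒜 ⊗[K] a →ₗ[𝒜] 𝒜 ⊗[K] a,
      ((LinearMap.baseChange 𝒜 prA) ∘ₗ I) ∘ₗ Ψ = LinearMap.id ∧
      Ψ ∘ₗ ((LinearMap.baseChange 𝒜 prA) ∘ₗ I) = LinearMap.id ∧
      (∀ x : 𝒜 ⊗[K] a,
        ((LinearMap.baseChange 𝒜 prB) ∘ₗ I ∘ₗ Ψ) x ∈ LinearMap.ker (evMap K 𝒜 ev b)) ∧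
      StdEq 𝒜 i j prA ((LinearMap.baseChange 𝒜 prB) ∘ₗ I ∘ₗ Ψ) ∧
      I = (IxiMap 𝒜 i j ((LinearMap.baseChange 𝒜 prB) ∘ₗ I ∘ₗ Ψ))
            ∘ₗ ((LinearMap.baseChange 𝒜 prA) ∘ₗ I) ∧
      (∀ x y : 𝒜 ⊗[K] a,
        ((LinearMap.baseChange 𝒜 prA) ∘ₗ I) (B' x y)
          = (LinearMap.baseChange 𝒜 prA)
              ⁅IxiMap 𝒜 i j ((LinearMap.baseChange 𝒜 prB) ∘ₗ I ∘ₗ Ψ)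
                  (((LinearMap.baseChange 𝒜 prA) ∘ₗ I) x),
                IxiMap 𝒜 i j ((LinearMap.baseChange 𝒜 prB) ∘ₗ I ∘ₗ Ψ)
                  (((LinearMap.baseChange 𝒜 prA) ∘ₗ I) y)⁆) := by
  classical
  set J : Ideal 𝒜 := RingHom.ker ev.toRingHom with hJ
  set Φ : 𝒜 ⊗[K] a →ₗ[𝒜] 𝒜 ⊗[K] a := (LinearMap.baseChange 𝒜 prA) ∘ₗ I with hΦ
  set N : 𝒜 ⊗[K] a →ₗ[𝒜] 𝒜 ⊗[K] a := Φ - LinearMap.id with hN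
  -- evaluation of I on pure tensors
  have hIc : ∀ (c : 𝒜) (t : a), evMap K 𝒜 ev l (I (c ⊗ₜ[K] t)) = ev c • i t := by
    intro c t
    have h1 : c ⊗ₜ[K] t = c • ((1 : 𝒜) ⊗ₜ[K] t) := by
      rw [TensorProduct.smul_tmul', smul_eq_mul, mul_one]
    rw [h1, map_smul, evMap_smul, hcen]
  -- evMap (N x) = 0
  have hNev : ∀ x : 𝒜 ⊗[K] a, evMap K 𝒜 ev a (N x) = 0 := by
    intro x
    induction x using TensorProduct.induction_on with
    | zero => simp
    | tmul c t =>
        have : N (c ⊗ₜ[K] t) = Φ (c ⊗ₜ[K] t) - c ⊗ₜ[K] t := rfl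
        rw [this, map_sub, hΦ, LinearMap.comp_apply, evMap_baseChange, hIc, evMap_tmul,
          map_smul, hpi, sub_self]
    | add x y hx hy => rw [map_add, map_add, hx, hy, add_zero]
  have hNmem : ∀ x : 𝒜 ⊗[K] a, N x ∈ J • (⊤ : Submodule 𝒜 (𝒜 ⊗[K] a)) := fun x =>
    mem_smul_of_evMap_eq_zero ev (N x) (hNev x)
  -- step lemma
  have hstep : ∀ (k : ℕ) (z : 𝒜 ⊗[K] a), z ∈ (J ^ (k + 1)) • (⊤ : Submodule 𝒜 (𝒜 ⊗[K] a)) →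
      N z ∈ (J ^ (k + 2)) • (⊤ : Submodule 𝒜 (𝒜 ⊗[K] a)) := by
    intro k z hz
    refine Submodule.smul_induction_on hz ?_ ?_
    · intro c hc y _
      rw [map_smul]
      refine Submodule.smul_induction_on (hNmem y) ?_ ?_
      · intro d hd u _
        rw [smul_smul]
        refine Submodule.smul_mem_smul ?_ trivial
        rw [pow_succ]
        exact Ideal.mul_mem_mul hc hd
      · intro u v hu hv
        rw [smul_add]
        exact Submodule.add_mem _ hu hv
    · intro u v hu hv
      rw [map_add]
      exact Submodule.add_mem _ hu hv
  have hpowmem : ∀ (k : ℕ) (x : 𝒜 ⊗[K] a),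
      (N ^ (k + 1)) x ∈ (J ^ (k + 1)) • (⊤ : Submodule 𝒜 (𝒜 ⊗[K] a)) := by
    intro k
    induction k with
    | zero => intro x; rw [pow_one, pow_one]; exact hNmem x
    | succ m ih =>
        intro x
        have h1 : (N ^ (m + 2)) x = N ((N ^ (m + 1)) x) := by
          rw [pow_succ', Module.End.mul_apply]
        rw [h1]
        exact hstep m _ (ih x)
  have hNnil : N ^ (n + 1) = 0 := by
    refine LinearMap.ext fun x => ?_
    have := hpowmem n x
    rw [hnil, Submodule.bot_smul, Submodule.mem_bot] at this
    simpa using this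
  have hPhiz : ∀ z : 𝒜 ⊗[K] a, Φ z = z + N z := by
    intro z
    rw [hN, LinearMap.sub_apply, LinearMap.id_apply]
    abel
  -- injectivity
  have hker : ∀ x : 𝒜 ⊗[K] a, Φ x = 0 → x = 0 := by
    intro x hx
    have h0 : x + N x = 0 := by rw [← hPhiz x, hx]
    have hNx : x = -(N x) := by
      have h1 : N x = -x := by
        rw [← neg_eq_of_add_eq_zero_right h0]
      rw [h1, neg_neg]
    have hmem : ∀ k : ℕ, x ∈ (J ^ (k + 1)) • (⊤ : Submodule 𝒜 (𝒜 ⊗[K] a)) := by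
      intro k
      induction k with
      | zero => rw [pow_one, hNx]; exact Submodule.neg_mem _ (hNmem x)
      | succ m ih =>
          rw [hNx]
          exact Submodule.neg_mem _ (hstep m x ih)
    have hb := hmem n
    rw [hnil, Submodule.bot_smul, Submodule.mem_bot] at hb
    exact hb
  have hinj : Function.Injective Φ := by
    intro u v huv
    have h0 : Φ (u - v) = 0 := by rw [map_sub, huv, sub_self]
    exact sub_eq_zero.mp (hker _ h0)
  have hsurj : Function.Surjective Φ := by
    intro y
    set g : ℕ → 𝒜 ⊗[K] a := fun k => ((-1 : ℤ) ^ k) • (N ^ k) y with hg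
    refine ⟨∑ k ∈ Finset.range (n + 1), g k, ?_⟩
    have hNg : ∀ k : ℕ, g k + N (g k) = g k - g (k + 1) := by
      intro k
      have h1 : N (g k) = ((-1 : ℤ) ^ k) • (N ^ (k + 1)) y := by
        simp only [hg]
        rw [map_zsmul, pow_succ', Module.End.mul_apply]
      have h2 : g (k + 1) = -(((-1 : ℤ) ^ k) • (N ^ (k + 1)) y) := by
        simp only [hg]
        rw [pow_succ, mul_comm, mul_smul, neg_one_smul]
      rw [h1, h2, sub_neg_eq_add]
    have hsum : Φ (∑ k ∈ Finset.range (n + 1), g k)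
        = ∑ k ∈ Finset.range (n + 1), (g k - g (k + 1)) := by
      rw [hPhiz, map_sum, ← Finset.sum_add_distrib]
      exact Finset.sum_congr rfl fun k _ => hNg k
    rw [hsum, Finset.sum_range_sub' g (n + 1)]
    have hg0 : g 0 = y := by simp only [hg]; simp
    have hgn : g (n + 1) = 0 := by simp only [hg]; rw [hNnil]; simp
    rw [hg0, hgn, sub_zero]
  have hbij : Function.Bijective Φ := ⟨hinj, hsurj⟩
  set E : (𝒜 ⊗[K] a) ≃ₗ[𝒜] (𝒜 ⊗[K] a) := LinearEquiv.ofBijective Φ hbij with hE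
  set Ψ : 𝒜 ⊗[K] a →ₗ[𝒜] 𝒜 ⊗[K] a := E.symm.toLinearMap with hPsi
  have hΦΨx : ∀ z, Φ (Ψ z) = z := by
    intro z
    have : Φ (Ψ z) = E (E.symm z) := rfl
    rw [this, LinearEquiv.apply_symm_apply]
  have hΨΦx : ∀ z, Ψ (Φ z) = z := by
    intro z
    have : Ψ (Φ z) = E.symm (E z) := rfl
    rw [this, LinearEquiv.symm_apply_apply]
  have hΦΨ' : Φ ∘ₗ Ψ = LinearMap.id := LinearMap.ext fun z => hΦΨx z
  have hΨΦ' : Ψ ∘ₗ Φ = LinearMap.id := LinearMap.ext fun z => hΨΦx z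
  -- base-changed splitting
  have hsplitA : ∀ u : 𝒜 ⊗[K] l,
      LinearMap.baseChange 𝒜 i.toLinearMap (LinearMap.baseChange 𝒜 prA u)
        + LinearMap.baseChange 𝒜 j (LinearMap.baseChange 𝒜 prB u) = u := by
    intro u
    induction u using TensorProduct.induction_on with
    | zero => simp
    | tmul c v =>
        rw [LinearMap.baseChange_tmul, LinearMap.baseChange_tmul,
          LinearMap.baseChange_tmul, LinearMap.baseChange_tmul, ← TensorProduct.tmul_add]
        exact congrArg _ (hsplit v)
    | add u v hu hv =>
        rw [map_add, map_add, map_add, map_add]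
        rw [add_add_add_comm, hu, hv]
  set ξ : 𝒜 ⊗[K] a →ₗ[𝒜] 𝒜 ⊗[K] b := (LinearMap.baseChange 𝒜 prB) ∘ₗ I ∘ₗ Ψ with hξ
  have hΦap : ∀ w : 𝒜 ⊗[K] a, LinearMap.baseChange 𝒜 prA (I w) = Φ w := fun _ => rfl
  -- I_ξ = I ∘ Ψ
  have hIx : ∀ z : 𝒜 ⊗[K] a, IxiMap 𝒜 i j ξ z = I (Ψ z) := by
    intro z
    have h1 : IxiMap 𝒜 i j ξ z
        = LinearMap.baseChange 𝒜 i.toLinearMap z + LinearMap.baseChange 𝒜 j (ξ z) := rfl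
    have h2 : ξ z = LinearMap.baseChange 𝒜 prB (I (Ψ z)) := rfl
    have h3 : LinearMap.baseChange 𝒜 i.toLinearMap z
        = LinearMap.baseChange 𝒜 i.toLinearMap (LinearMap.baseChange 𝒜 prA (I (Ψ z))) := by
      rw [hΦap, hΦΨx]
    rw [h1, h2, h3]
    exact hsplitA (I (Ψ z))
  -- prB part of evMap (I z) vanishes
  have hIprB : ∀ z : 𝒜 ⊗[K] a, prB (evMap K 𝒜 ev l (I z)) = 0 := by
    intro z
    induction z using TensorProduct.induction_on with
    | zero => simp
    | tmul c t => rw [hIc, map_smul, hpbi, smul_zero]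
    | add u v hu hv => rw [map_add, map_add, map_add, hu, hv, add_zero]
  refine ⟨hbij, Ψ, hΦΨ', hΨΦ', ?_, ?_, ?_, ?_⟩
  · intro z
    rw [LinearMap.mem_ker]
    have h2 : ξ z = LinearMap.baseChange 𝒜 prB (I (Ψ z)) := rfl
    rw [h2, evMap_baseChange]
    exact hIprB (Ψ z)
  · intro u v
    rw [hIx u, hIx v, ← hIlie, hIx, hΦap, hΨΦx]
  · refine LinearMap.ext fun z => ?_
    have h1 : (IxiMap 𝒜 i j ξ ∘ₗ Φ) z = I (Ψ (Φ z)) := by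
      rw [LinearMap.comp_apply, hIx]
    rw [h1, hΨΦx]
  · intro u v
    rw [hIx, hIx, hΨΦx, hΨΦx, ← hIlie, hΦap]
end
end

section
/- Suppose ξ satisfies the Maurer–Cartan equation. Define, for k ≥ 0, the 𝒜-linear maps x^k := pr_a∘δ^k∘I_ξ : a⊗𝒜 → a⊗𝒜 and y^k := pr_b∘δ^k∘I_ξ : a⊗𝒜 → b⊗𝒜 (with δ⁰ = id). Then for every k ≥ 0 one has y^k = −Σ_{p=0}^{k} C(k,p) · e^p ∘ x^{k−p}, where C(k,p) is the binomial coefficient. (This is the key Lemma of the paper's appendix, for a Lie pair over a point.) -/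
open TensorProduct

noncomputable section

variable {K : Type} [Field K]
  {l : Type} [LieRing l] [LieAlgebra K l]
  {a : Type} [LieRing a] [LieAlgebra K a]
  {b : Type} [AddCommGroup b] [Module K b]

/-- The binary operation [δ,X]₂ := pr_b∘δ∘j∘X − X∘pr_a∘δ∘i. -/
def br2 (𝒜 : Type) [CommRing 𝒜] [Algebra K 𝒜]
    (i : a →ₗ⁅K⁆ l) (j : b →ₗ[K] l) (prA : l →ₗ[K] a) (prB : l →ₗ[K] b)
    (δ : Module.End 𝒜 (𝒜 ⊗[K] l)) (X : 𝒜 ⊗[K] a →ₗ[𝒜] 𝒜 ⊗[K] b) :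
    𝒜 ⊗[K] a →ₗ[𝒜] 𝒜 ⊗[K] b :=
  (LinearMap.baseChange 𝒜 prB) ∘ₗ δ ∘ₗ (LinearMap.baseChange 𝒜 j) ∘ₗ X
    - X ∘ₗ (LinearMap.baseChange 𝒜 prA) ∘ₗ δ ∘ₗ (LinearMap.baseChange 𝒜 i.toLinearMap)

/-- The ternary operation [δ,X,Y]₃ := Y∘pr_a∘δ∘j∘X + X∘pr_a∘δ∘j∘Y. -/
def br3 (𝒜 : Type) [CommRing 𝒜] [Algebra K 𝒜]
    (i : a →ₗ⁅K⁆ l) (j : b →ₗ[K] l) (prA : l →ₗ[K] a)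
    (δ : Module.End 𝒜 (𝒜 ⊗[K] l)) (X Y : 𝒜 ⊗[K] a →ₗ[𝒜] 𝒜 ⊗[K] b) :
    𝒜 ⊗[K] a →ₗ[𝒜] 𝒜 ⊗[K] b :=
  Y ∘ₗ (LinearMap.baseChange 𝒜 prA) ∘ₗ δ ∘ₗ (LinearMap.baseChange 𝒜 j) ∘ₗ X
    + X ∘ₗ (LinearMap.baseChange 𝒜 prA) ∘ₗ δ ∘ₗ (LinearMap.baseChange 𝒜 j) ∘ₗ Y

section AuxHelpers

variable {R M N P : Type*} [CommRing R] [AddCommGroup M] [AddCommGroup N] [AddCommGroup P]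
  [Module R M] [Module R N] [Module R P]

lemma myCompSum {ι : Type*} (s : Finset ι) (f : N →ₗ[R] P) (g : ι → M →ₗ[R] N) :
    f ∘ₗ (∑ x ∈ s, g x) = ∑ x ∈ s, f ∘ₗ g x := by
  refine LinearMap.ext fun m => ?_
  simp [LinearMap.sum_apply, map_sum]

lemma mySumComp {ι : Type*} (s : Finset ι) (f : M →ₗ[R] N) (g : ι → N →ₗ[R] P) :
    (∑ x ∈ s, g x) ∘ₗ f = ∑ x ∈ s, g x ∘ₗ f := by
  refine LinearMap.ext fun m => ?_
  simp [LinearMap.sum_apply]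

lemma myCompNsmul (k : ℕ) (f : N →ₗ[R] P) (g : M →ₗ[R] N) :
    f ∘ₗ (k • g) = k • (f ∘ₗ g) := by
  refine LinearMap.ext fun m => ?_; simp

lemma myNsmulComp (k : ℕ) (f : M →ₗ[R] N) (g : N →ₗ[R] P) :
    (k • g) ∘ₗ f = k • (g ∘ₗ f) := by
  refine LinearMap.ext fun m => ?_; simp

lemma myCompNeg (f : N →ₗ[R] P) (g : M →ₗ[R] N) : f ∘ₗ (-g) = -(f ∘ₗ g) := by
  refine LinearMap.ext fun m => ?_; simp

lemma myNegComp (f : M →ₗ[R] N) (g : N →ₗ[R] P) : (-g) ∘ₗ f = -(g ∘ₗ f) := by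
  refine LinearMap.ext fun m => ?_; simp

lemma myCompAdd (f : N →ₗ[R] P) (g h : M →ₗ[R] N) : f ∘ₗ (g + h) = f ∘ₗ g + f ∘ₗ h := by
  refine LinearMap.ext fun m => ?_; simp

lemma myAddComp (f : M →ₗ[R] N) (g h : N →ₗ[R] P) : (g + h) ∘ₗ f = g ∘ₗ f + h ∘ₗ f := by
  refine LinearMap.ext fun m => ?_; simp

lemma myCompSub (f : N →ₗ[R] P) (g h : M →ₗ[R] N) : f ∘ₗ (g - h) = f ∘ₗ g - f ∘ₗ h := by
  refine LinearMap.ext fun m => ?_; simp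

lemma mySubComp (f : M →ₗ[R] N) (g h : N →ₗ[R] P) : (g - h) ∘ₗ f = g ∘ₗ f - h ∘ₗ f := by
  refine LinearMap.ext fun m => ?_; simp

end AuxHelpers

lemma sum_Ioo_succ {M : Type*} [AddCommMonoid M] (p : ℕ) (g : ℕ → M) :
    ∑ r ∈ Finset.Ioo 0 (p+1), g r = ∑ r ∈ Finset.range p, g (r+1) := by
  refine Finset.sum_nbij' (fun r => r - 1) (fun r => r + 1) ?_ ?_ ?_ ?_ ?_
  · intro r hr; simp only [Finset.mem_Ioo] at hr; simp only [Finset.mem_range]; omega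
  · intro r hr; simp only [Finset.mem_range] at hr; simp only [Finset.mem_Ioo]; omega
  · intro r hr; simp only [Finset.mem_Ioo] at hr; omega
  · intro r hr; simp only [Finset.mem_range] at hr; omega
  · intro r hr; simp only [Finset.mem_Ioo] at hr
    congr 1; omega

lemma choose_helper {n a b : ℕ} (h : a + b + 2 ≤ n) :
    n.choose (a+1) * (n-a-1).choose (b+1) = n.choose (a+b+2) * (a+b+2).choose (a+1) := by
  have hfac : 0 < (a+1).factorial * ((b+1).factorial * (n-(a+b+2)).factorial) := by positivity
  apply Nat.eq_of_mul_eq_mul_right hfac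
  have h1 := Nat.choose_mul_factorial_mul_factorial (show a+1 ≤ n by omega)
  have h2 := Nat.choose_mul_factorial_mul_factorial (show b+1 ≤ n-a-1 by omega)
  have h3 := Nat.choose_mul_factorial_mul_factorial (show a+b+2 ≤ n from h)
  have h4 := Nat.choose_mul_factorial_mul_factorial (show a+1 ≤ a+b+2 by omega)
  have e1 : n - (a+1) = n - a - 1 := by omega
  have e2 : (n-a-1) - (b+1) = n - (a+b+2) := by omega
  have e3 : (a+b+2) - (a+1) = b+1 := by omega
  rw [e1] at h1; rw [e2] at h2; rw [e3] at h4
  calc n.choose (a+1) * (n-a-1).choose (b+1) * ((a+1).factorial * ((b+1).factorial * (n-(a+b+2)).factorial))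
      = (n.choose (a+1) * (a+1).factorial) * ((n-a-1).choose (b+1) * (b+1).factorial * (n-(a+b+2)).factorial) := by ring
    _ = (n.choose (a+1) * (a+1).factorial) * (n-a-1).factorial := by rw [h2]
    _ = n.factorial := by rw [← h1]
    _ = n.choose (a+b+2) * (a+b+2).factorial * (n-(a+b+2)).factorial := by rw [h3]
    _ = n.choose (a+b+2) * ((a+b+2).choose (a+1) * (a+1).factorial * (b+1).factorial) * (n-(a+b+2)).factorial := by rw [h4]
    _ = n.choose (a+b+2) * (a+b+2).choose (a+1) * ((a+1).factorial * ((b+1).factorial * (n-(a+b+2)).factorial)) := by ring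

lemma multinomial_split {M : Type*} [AddCommMonoid M] (n : ℕ) (V : ℕ → ℕ → M) :
    ∑ p ∈ Finset.range (n+1), ∑ r ∈ Finset.range (n+1-p), (n.choose p * (n-p).choose r) • V p r
    = V 0 0 + ∑ p ∈ Finset.range n, n.choose (p+1) • V (p+1) 0
      + ∑ p ∈ Finset.range n, n.choose (p+1) • V 0 (p+1)
      + ∑ p ∈ Finset.range n, ∑ r ∈ Finset.range p, (n.choose (p+1) * (p+1).choose (r+1)) • V (r+1) (p-r) := by
  rw [Finset.sum_range_succ']
  have hF0 : (∑ r ∈ Finset.range (n+1-0), (n.choose 0 * (n-0).choose r) • V 0 r)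
      = V 0 0 + ∑ r ∈ Finset.range n, n.choose (r+1) • V 0 (r+1) := by
    simp only [Nat.sub_zero, Nat.choose_zero_right, one_mul]
    rw [Finset.sum_range_succ']
    rw [Nat.choose_zero_right, one_smul, add_comm]
  have hFp : ∀ p ∈ Finset.range n,
      (∑ r ∈ Finset.range (n+1-(p+1)), (n.choose (p+1) * (n-(p+1)).choose r) • V (p+1) r)
      = n.choose (p+1) • V (p+1) 0
        + ∑ r ∈ Finset.range (n-1-p), (n.choose (p+1) * (n-p-1).choose (r+1)) • V (p+1) (r+1) := by
    intro p hp
    simp only [Finset.mem_range] at hp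
    have h1 : n+1-(p+1) = (n-1-p)+1 := by omega
    have h2 : n-(p+1) = n-p-1 := by omega
    rw [h1, h2, Finset.sum_range_succ']
    rw [Nat.choose_zero_right, mul_one, add_comm]
  rw [Finset.sum_congr rfl hFp, hF0, Finset.sum_add_distrib]
  have hD : (∑ p ∈ Finset.range n, ∑ r ∈ Finset.range (n-1-p),
        (n.choose (p+1) * (n-p-1).choose (r+1)) • V (p+1) (r+1))
      = ∑ p ∈ Finset.range n, ∑ r ∈ Finset.range p,
        (n.choose (p+1) * (p+1).choose (r+1)) • V (r+1) (p-r) := by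
    rw [Finset.sum_sigma', Finset.sum_sigma']
    refine Finset.sum_nbij' (fun x => ⟨x.1 + x.2 + 1, x.1⟩) (fun x => ⟨x.2, x.1 - x.2 - 1⟩)
      ?_ ?_ ?_ ?_ ?_
    · rintro ⟨p, r⟩ hx
      simp only [Finset.mem_sigma, Finset.mem_range] at hx ⊢
      omega
    · rintro ⟨p, r⟩ hx
      simp only [Finset.mem_sigma, Finset.mem_range] at hx ⊢
      omega
    · rintro ⟨p, r⟩ hx
      simp only [Finset.mem_sigma, Finset.mem_range] at hx
      dsimp only
      have h1 : p + r + 1 - p - 1 = r := by omega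
      rw [h1]
    · rintro ⟨p, r⟩ hx
      simp only [Finset.mem_sigma, Finset.mem_range] at hx
      dsimp only
      have h1 : r + (p - r - 1) + 1 = p := by omega
      rw [h1]
    · rintro ⟨p, r⟩ hx
      simp only [Finset.mem_sigma, Finset.mem_range] at hx
      dsimp only
      have h1 : p + r + 1 + 1 = p + r + 2 := by omega
      have h2 : p + r + 1 - p = r + 1 := by omega
      rw [h1, h2, choose_helper (by omega : p + r + 2 ≤ n)]
  rw [hD]
  abel

section StepLemma

variable {R M N : Type*} [CommRing R] [AddCommGroup M] [AddCommGroup N] [Module R M] [Module R N]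

lemma step_lemma
    (e : ℕ → (M →ₗ[R] N)) (X : ℕ → (M →ₗ[R] M)) (Y : ℕ → (M →ₗ[R] N))
    (Sm : M →ₗ[R] M) (Qm : N →ₗ[R] M) (Pm : N →ₗ[R] N) (Rm : M →ₗ[R] N)
    (hX : ∀ m, X (m+1) = Sm ∘ₗ X m + Qm ∘ₗ Y m)
    (hY : ∀ m, Y (m+1) = Rm ∘ₗ X m + Pm ∘ₗ Y m)
    (hX0 : X 0 = LinearMap.id)
    (hY0 : Y 0 = -(e 0))
    (he1 : e 1 = -(Y 1) + (-(e 0)) ∘ₗ X 1)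
    (hcrec : ∀ p, 1 ≤ p → e (p+1) = Pm ∘ₗ e p - e p ∘ₗ Sm + e p ∘ₗ (Qm ∘ₗ e 0)
        + e 0 ∘ₗ (Qm ∘ₗ e p)
        + ∑ r ∈ Finset.Ioo 0 p, (p.choose r) • (e r ∘ₗ (Qm ∘ₗ e (p-r)))) :
    ∀ k, Y k = -∑ p ∈ Finset.range (k+1), (k.choose p) • (e p ∘ₗ X (k-p)) := by
  intro k
  induction k using Nat.strong_induction_on with
  | _ k ih =>
  rcases k with _ | _ | n
  · simp [Finset.sum_range_succ, hX0, hY0]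
  · rw [Finset.sum_range_succ, Finset.sum_range_one, hX0, he1]
    simp only [Nat.sub_self, Nat.sub_zero, Nat.choose_self, Nat.choose_zero_right, one_smul,
      LinearMap.comp_id, myNegComp]
    abel
  · -- k = n + 2
    show Y (n+1+1) = -∑ p ∈ Finset.range (n+1+2),
      ((n+1+1).choose p) • (e p ∘ₗ X (n+1+1-p))
    have hsplit2 : (∑ p ∈ Finset.range (n+1+2), ((n+1+1).choose p) • (e p ∘ₗ X (n+1+1-p)))
        = (∑ p ∈ Finset.range (n+1+1), ((n+1).choose p) • (e p ∘ₗ X (n+1+1-p)))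
          + ∑ p ∈ Finset.range (n+1+1), ((n+1).choose p) • (e (p+1) ∘ₗ X (n+1-p)) :=
      Finset.sum_choose_succ_nsmul (fun i j => e i ∘ₗ X j) (n+1)
    rw [hsplit2]
    set m := n + 1 with hm
    have ihm : Y m = -∑ p ∈ Finset.range (m+1), (m.choose p) • (e p ∘ₗ X (m-p)) :=
      ih m (by omega)
    -- compute the LHS
    have hLHS : Y (m+1) = Rm ∘ₗ X m
        - ∑ p ∈ Finset.range (m+1), m.choose p • (Pm ∘ₗ (e p ∘ₗ X (m-p))) := by
      rw [hY m, ihm, myCompNeg, myCompSum]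
      simp only [myCompNsmul, sub_eq_add_neg]
    -- head term of the second sum
    have hY1 : Y 1 = Rm ∘ₗ X 0 + Pm ∘ₗ Y 0 := hY 0
    have hX1 : X 1 = Sm ∘ₗ X 0 + Qm ∘ₗ Y 0 := hX 0
    have hhead : e 1 ∘ₗ X m
        = -(Rm ∘ₗ X m) + Pm ∘ₗ (e 0 ∘ₗ X m) - e 0 ∘ₗ (Sm ∘ₗ X m)
          + e 0 ∘ₗ (Qm ∘ₗ (e 0 ∘ₗ X m)) := by
      rw [he1, hY1, hX1, hX0, hY0]
      simp only [LinearMap.comp_id, myCompNeg, myNegComp, myAddComp, myCompAdd,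
        LinearMap.comp_assoc]
      abel
    -- first sum
    have hS1 : (∑ p ∈ Finset.range (m+1), m.choose p • (e p ∘ₗ X (m+1-p)))
        = ∑ p ∈ Finset.range (m+1), m.choose p • (e p ∘ₗ (Sm ∘ₗ X (m-p)))
          - ∑ p ∈ Finset.range (m+1), ∑ r ∈ Finset.range (m+1-p),
              (m.choose p * (m-p).choose r) • (e p ∘ₗ (Qm ∘ₗ (e r ∘ₗ X (m-p-r)))) := by
      rw [← Finset.sum_sub_distrib]
      refine Finset.sum_congr rfl fun p hp => ?_
      simp only [Finset.mem_range] at hp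
      have h1 : m + 1 - p = (m - p) + 1 := by omega
      rw [h1, hX (m-p), ih (m-p) (by omega)]
      simp only [myCompAdd, myCompNeg, myCompSum, myCompNsmul, LinearMap.comp_assoc,
        smul_add, smul_neg, Finset.smul_sum, smul_smul]
      rw [sub_eq_add_neg]
    -- the multinomial splitting of the double sum
    have hT0 : (∑ p ∈ Finset.range (m+1), ∑ r ∈ Finset.range (m+1-p),
          (m.choose p * (m-p).choose r) • (e p ∘ₗ (Qm ∘ₗ (e r ∘ₗ X (m-p-r)))))
        = (e 0 ∘ₗ (Qm ∘ₗ (e 0 ∘ₗ X (m-0-0))))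
          + ∑ p ∈ Finset.range m, m.choose (p+1) • (e (p+1) ∘ₗ (Qm ∘ₗ (e 0 ∘ₗ X (m-(p+1)-0))))
          + ∑ p ∈ Finset.range m, m.choose (p+1) • (e 0 ∘ₗ (Qm ∘ₗ (e (p+1) ∘ₗ X (m-0-(p+1)))))
          + ∑ p ∈ Finset.range m, ∑ r ∈ Finset.range p,
              (m.choose (p+1) * (p+1).choose (r+1)) •
                (e (r+1) ∘ₗ (Qm ∘ₗ (e (p-r) ∘ₗ X (m-(r+1)-(p-r))))) :=
      multinomial_split m (fun p r => e p ∘ₗ (Qm ∘ₗ (e r ∘ₗ X (m-p-r))))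
    have hT : (∑ p ∈ Finset.range (m+1), ∑ r ∈ Finset.range (m+1-p),
          (m.choose p * (m-p).choose r) • (e p ∘ₗ (Qm ∘ₗ (e r ∘ₗ X (m-p-r)))))
        = e 0 ∘ₗ (Qm ∘ₗ (e 0 ∘ₗ X m))
          + ∑ p ∈ Finset.range m, m.choose (p+1) • (e (p+1) ∘ₗ (Qm ∘ₗ (e 0 ∘ₗ X (m-p-1))))
          + ∑ p ∈ Finset.range m, m.choose (p+1) • (e 0 ∘ₗ (Qm ∘ₗ (e (p+1) ∘ₗ X (m-p-1))))
          + ∑ p ∈ Finset.range m, ∑ r ∈ Finset.range p,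
              (m.choose (p+1) * (p+1).choose (r+1)) •
                (e (r+1) ∘ₗ (Qm ∘ₗ (e (p-r) ∘ₗ X (m-p-1)))) := by
      rw [hT0]
      have c1 : (e 0 ∘ₗ (Qm ∘ₗ (e 0 ∘ₗ X (m-0-0)))) = e 0 ∘ₗ (Qm ∘ₗ (e 0 ∘ₗ X m)) := by
        norm_num
      have c2 : (∑ p ∈ Finset.range m, m.choose (p+1) •
            (e (p+1) ∘ₗ (Qm ∘ₗ (e 0 ∘ₗ X (m-(p+1)-0)))))
          = ∑ p ∈ Finset.range m, m.choose (p+1) • (e (p+1) ∘ₗ (Qm ∘ₗ (e 0 ∘ₗ X (m-p-1)))) :=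
        Finset.sum_congr rfl fun p hp => by
          have h1 : m - (p+1) - 0 = m - p - 1 := by omega
          rw [h1]
      have c3 : (∑ p ∈ Finset.range m, m.choose (p+1) •
            (e 0 ∘ₗ (Qm ∘ₗ (e (p+1) ∘ₗ X (m-0-(p+1))))))
          = ∑ p ∈ Finset.range m, m.choose (p+1) • (e 0 ∘ₗ (Qm ∘ₗ (e (p+1) ∘ₗ X (m-p-1)))) :=
        Finset.sum_congr rfl fun p hp => by
          have h1 : m - 0 - (p+1) = m - p - 1 := by omega
          rw [h1]
      have c4 : (∑ p ∈ Finset.range m, ∑ r ∈ Finset.range p,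
            (m.choose (p+1) * (p+1).choose (r+1)) •
              (e (r+1) ∘ₗ (Qm ∘ₗ (e (p-r) ∘ₗ X (m-(r+1)-(p-r))))))
          = ∑ p ∈ Finset.range m, ∑ r ∈ Finset.range p,
            (m.choose (p+1) * (p+1).choose (r+1)) •
              (e (r+1) ∘ₗ (Qm ∘ₗ (e (p-r) ∘ₗ X (m-p-1)))) :=
        Finset.sum_congr rfl fun p hp => Finset.sum_congr rfl fun r hr => by
          simp only [Finset.mem_range] at hr
          have h1 : m - (r+1) - (p-r) = m - p - 1 := by omega
          rw [h1]
      rw [c1, c2, c3, c4]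
    -- second sum
    have hS2 : (∑ p ∈ Finset.range (m+1), m.choose p • (e (p+1) ∘ₗ X (m-p)))
        = (∑ p ∈ Finset.range m, m.choose (p+1) •
              (Pm ∘ₗ (e (p+1) ∘ₗ X (m-p-1)) - e (p+1) ∘ₗ (Sm ∘ₗ X (m-p-1))
                + e (p+1) ∘ₗ (Qm ∘ₗ (e 0 ∘ₗ X (m-p-1)))
                + e 0 ∘ₗ (Qm ∘ₗ (e (p+1) ∘ₗ X (m-p-1)))
                + ∑ r ∈ Finset.range p, (p+1).choose (r+1) •
                    (e (r+1) ∘ₗ (Qm ∘ₗ (e (p-r) ∘ₗ X (m-p-1))))))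
          + (-(Rm ∘ₗ X m) + Pm ∘ₗ (e 0 ∘ₗ X m) - e 0 ∘ₗ (Sm ∘ₗ X m)
              + e 0 ∘ₗ (Qm ∘ₗ (e 0 ∘ₗ X m))) := by
      rw [Finset.sum_range_succ']
      have htail : (∑ p ∈ Finset.range m, m.choose (p+1) • (e (p+1+1) ∘ₗ X (m-(p+1))))
          = ∑ p ∈ Finset.range m, m.choose (p+1) •
              (Pm ∘ₗ (e (p+1) ∘ₗ X (m-p-1)) - e (p+1) ∘ₗ (Sm ∘ₗ X (m-p-1))
                + e (p+1) ∘ₗ (Qm ∘ₗ (e 0 ∘ₗ X (m-p-1)))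
                + e 0 ∘ₗ (Qm ∘ₗ (e (p+1) ∘ₗ X (m-p-1)))
                + ∑ r ∈ Finset.range p, (p+1).choose (r+1) •
                    (e (r+1) ∘ₗ (Qm ∘ₗ (e (p-r) ∘ₗ X (m-p-1))))) :=
        Finset.sum_congr rfl fun p hp => by
          have h1 : m - (p+1) = m - p - 1 := by omega
          rw [hcrec (p+1) (by omega), h1]
          simp only [mySubComp, myAddComp, mySumComp, myNsmulComp, LinearMap.comp_assoc]
          rw [sum_Ioo_succ]
          simp only [Nat.add_sub_add_right]
      rw [htail]
      simp only [Nat.choose_zero_right, one_smul, Nat.sub_zero, zero_add]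
      rw [hhead]
    -- splitting of the two simple sums
    have hWsplit : (∑ p ∈ Finset.range (m+1), m.choose p • (Pm ∘ₗ (e p ∘ₗ X (m-p))))
        = (∑ p ∈ Finset.range m, m.choose (p+1) • (Pm ∘ₗ (e (p+1) ∘ₗ X (m-p-1))))
          + Pm ∘ₗ (e 0 ∘ₗ X m) := by
      rw [Finset.sum_range_succ']
      have htail : (∑ p ∈ Finset.range m, m.choose (p+1) • (Pm ∘ₗ (e (p+1) ∘ₗ X (m-(p+1)))))
          = ∑ p ∈ Finset.range m, m.choose (p+1) • (Pm ∘ₗ (e (p+1) ∘ₗ X (m-p-1))) :=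
        Finset.sum_congr rfl fun p hp => by
          have h1 : m - (p+1) = m - p - 1 := by omega
          rw [h1]
      rw [htail]
      norm_num
    have hUsplit : (∑ p ∈ Finset.range (m+1), m.choose p • (e p ∘ₗ (Sm ∘ₗ X (m-p))))
        = (∑ p ∈ Finset.range m, m.choose (p+1) • (e (p+1) ∘ₗ (Sm ∘ₗ X (m-p-1))))
          + e 0 ∘ₗ (Sm ∘ₗ X m) := by
      rw [Finset.sum_range_succ']
      have htail : (∑ p ∈ Finset.range m, m.choose (p+1) • (e (p+1) ∘ₗ (Sm ∘ₗ X (m-(p+1)))))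
          = ∑ p ∈ Finset.range m, m.choose (p+1) • (e (p+1) ∘ₗ (Sm ∘ₗ X (m-p-1))) :=
        Finset.sum_congr rfl fun p hp => by
          have h1 : m - (p+1) = m - p - 1 := by omega
          rw [h1]
      rw [htail]
      norm_num
    rw [hLHS, hS1, hT, hS2, hWsplit, hUsplit]
    simp only [smul_sub, smul_add, Finset.sum_add_distrib, Finset.sum_sub_distrib,
      Finset.smul_sum, smul_smul]
    abel

end StepLemma

/- STATEMENT 11 (key Lemma of the appendix, over a point): with
x^k := pr_a∘δ^k∘I_ξ and y^k := pr_b∘δ^k∘I_ξ, one has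
y^k = −Σ_{p=0}^{k} C(k,p)·(e^p ∘ x^{k−p}) for every k ≥ 0. -/
theorem stmt_11
    {𝒜 : Type} [CommRing 𝒜] [Algebra K 𝒜] [CharZero K]
    (ev : 𝒜 →ₐ[K] K) (n : ℕ) (hnil : (RingHom.ker ev.toRingHom) ^ (n + 1) = ⊥)
    (i : a →ₗ⁅K⁆ l) (hi : Function.Injective i)
    (j : b →ₗ[K] l) (prA : l →ₗ[K] a) (prB : l →ₗ[K] b)
    (hpi : ∀ x : a, prA (i x) = x) (hpj : ∀ w : b, prB (j w) = w)
    (hpaj : ∀ w : b, prA (j w) = 0) (hpbi : ∀ x : a, prB (i x) = 0)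
    (hsplit : ∀ u : l, i (prA u) + j (prB u) = u)
    (ξ : 𝒜 ⊗[K] a →ₗ[𝒜] 𝒜 ⊗[K] b)
    (hξm : ∀ x : 𝒜 ⊗[K] a, ξ x ∈ LinearMap.ker (evMap K 𝒜 ev b))
    (hmc : ∀ a₁ a₂ : a, mcTerm 𝒜 i j prA prB ξ a₁ a₂ = 0)
    (δ : Module.End 𝒜 (𝒜 ⊗[K] l))
    (hder : ∀ u v : 𝒜 ⊗[K] l, δ ⁅u, v⁆ = ⁅δ u, v⁆ + ⁅u, δ v⁆)
    (hδm : ∀ u : 𝒜 ⊗[K] l, δ u ∈ LinearMap.ker (evMap K 𝒜 ev l))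
    (e : ℕ → (𝒜 ⊗[K] a →ₗ[𝒜] 𝒜 ⊗[K] b))
    (he0 : e 0 = -ξ)
    (he1 : e 1 = -((LinearMap.baseChange 𝒜 prB) ∘ₗ δ ∘ₗ IxiMap 𝒜 i j ξ)
        + ξ ∘ₗ ((LinearMap.baseChange 𝒜 prA) ∘ₗ δ ∘ₗ IxiMap 𝒜 i j ξ))
    (herec : ∀ k : ℕ, 1 ≤ k →
      e (k + 1) = br2 𝒜 i j prA prB δ (e k) - br3 𝒜 i j prA δ ξ (e k)
        + (algebraMap K 𝒜 ((2 : K)⁻¹)) •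
            ∑ p ∈ Finset.Ioo 0 k,
              (algebraMap K 𝒜
                  ((k.factorial : K) / ((p.factorial : K) * ((k - p).factorial : K)))) •
                br3 𝒜 i j prA δ (e p) (e (k - p))) :
    ∀ k : ℕ,
      (LinearMap.baseChange 𝒜 prB) ∘ₗ (δ ^ k : Module.End 𝒜 (𝒜 ⊗[K] l)) ∘ₗ IxiMap 𝒜 i j ξ
        = -∑ p ∈ Finset.range (k + 1),
            (k.choose p) •
              ((e p) ∘ₗ ((LinearMap.baseChange 𝒜 prA)
                ∘ₗ (δ ^ (k - p) : Module.End 𝒜 (𝒜 ⊗[K] l)) ∘ₗ IxiMap 𝒜 i j ξ)) := by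
  set iA := LinearMap.baseChange 𝒜 i.toLinearMap with hiAdef
  set jA := LinearMap.baseChange 𝒜 j with hjAdef
  set pA := LinearMap.baseChange 𝒜 prA with hpAdef
  set pB := LinearMap.baseChange 𝒜 prB with hpBdef
  set Iξ := IxiMap 𝒜 i j ξ with hIdef
  -- projection identities, base changed
  have hprAi : prA ∘ₗ i.toLinearMap = LinearMap.id := LinearMap.ext hpi
  have hprBj : prB ∘ₗ j = LinearMap.id := LinearMap.ext hpj
  have hprAj : prA ∘ₗ j = 0 := LinearMap.ext hpaj
  have hprBi : prB ∘ₗ i.toLinearMap = 0 := LinearMap.ext hpbi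
  have hsplit' : i.toLinearMap ∘ₗ prA + j ∘ₗ prB = LinearMap.id := LinearMap.ext hsplit
  have f1 : pA ∘ₗ iA = LinearMap.id := by
    rw [hpAdef, hiAdef, ← LinearMap.baseChange_comp, hprAi, LinearMap.baseChange_id]
  have f2 : pB ∘ₗ jA = LinearMap.id := by
    rw [hpBdef, hjAdef, ← LinearMap.baseChange_comp, hprBj, LinearMap.baseChange_id]
  have f3 : pA ∘ₗ jA = 0 := by
    rw [hpAdef, hjAdef, ← LinearMap.baseChange_comp, hprAj, LinearMap.baseChange_zero]
  have f4 : pB ∘ₗ iA = 0 := by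
    rw [hpBdef, hiAdef, ← LinearMap.baseChange_comp, hprBi, LinearMap.baseChange_zero]
  have f5 : iA ∘ₗ pA + jA ∘ₗ pB = LinearMap.id := by
    rw [hpAdef, hiAdef, hpBdef, hjAdef, ← LinearMap.baseChange_comp,
      ← LinearMap.baseChange_comp, ← LinearMap.baseChange_add, hsplit',
      LinearMap.baseChange_id]
  -- the four structure operators
  set Sm := pA ∘ₗ (δ ∘ₗ iA) with hSmdef
  set Qm := pA ∘ₗ (δ ∘ₗ jA) with hQmdef
  set Pm := pB ∘ₗ (δ ∘ₗ jA) with hPmdef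
  set Rm := pB ∘ₗ (δ ∘ₗ iA) with hRmdef
  have hIxi : Iξ = iA + jA ∘ₗ ξ := rfl
  have hpAI : pA ∘ₗ Iξ = LinearMap.id := by
    rw [hIxi, myCompAdd, ← LinearMap.comp_assoc, f3, f1]
    simp
  have hpBI : pB ∘ₗ Iξ = ξ := by
    rw [hIxi, myCompAdd, ← LinearMap.comp_assoc, f4, f2]
    simp
  have hX0' : pA ∘ₗ ((δ^(0:ℕ)) ∘ₗ Iξ) = LinearMap.id := by
    rw [pow_zero, Module.End.one_eq_id, LinearMap.id_comp, hpAI]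
  have hnn : - -ξ = ξ := neg_neg ξ
  have hY0' : pB ∘ₗ ((δ^(0:ℕ)) ∘ₗ Iξ) = -(e 0) := by
    rw [pow_zero, Module.End.one_eq_id, LinearMap.id_comp, hpBI, he0, hnn]
  have hdecomp : ∀ Z : 𝒜 ⊗[K] a →ₗ[𝒜] 𝒜 ⊗[K] l, δ ∘ₗ Z
      = (δ ∘ₗ iA) ∘ₗ (pA ∘ₗ Z) + (δ ∘ₗ jA) ∘ₗ (pB ∘ₗ Z) := by
    intro Z
    refine LinearMap.ext fun x => ?_
    have h5 := LinearMap.ext_iff.mp f5 (Z x)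
    simp only [LinearMap.add_apply, LinearMap.comp_apply, LinearMap.id_apply] at h5 ⊢
    rw [← map_add, h5]
  have hpow : ∀ m : ℕ, (δ^(m+1)) ∘ₗ Iξ = δ ∘ₗ ((δ^m) ∘ₗ Iξ) := by
    intro m
    rw [pow_succ', Module.End.mul_eq_comp, LinearMap.comp_assoc]
  have hXrec : ∀ m : ℕ, pA ∘ₗ ((δ^(m+1)) ∘ₗ Iξ)
      = Sm ∘ₗ (pA ∘ₗ ((δ^m) ∘ₗ Iξ)) + Qm ∘ₗ (pB ∘ₗ ((δ^m) ∘ₗ Iξ)) := by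
    intro m
    rw [hpow m, hdecomp ((δ^m) ∘ₗ Iξ)]
    refine LinearMap.ext fun x => ?_
    simp only [hSmdef, hQmdef, LinearMap.comp_apply, LinearMap.add_apply, map_add]
  have hYrec : ∀ m : ℕ, pB ∘ₗ ((δ^(m+1)) ∘ₗ Iξ)
      = Rm ∘ₗ (pA ∘ₗ ((δ^m) ∘ₗ Iξ)) + Pm ∘ₗ (pB ∘ₗ ((δ^m) ∘ₗ Iξ)) := by
    intro m
    rw [hpow m, hdecomp ((δ^m) ∘ₗ Iξ)]
    refine LinearMap.ext fun x => ?_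
    simp only [hRmdef, hPmdef, LinearMap.comp_apply, LinearMap.add_apply, map_add]
  have hxi : ξ = -(e 0) := by rw [he0, hnn]
  have he1' : e 1 = -(pB ∘ₗ ((δ^(1:ℕ)) ∘ₗ Iξ)) + (-(e 0)) ∘ₗ (pA ∘ₗ ((δ^(1:ℕ)) ∘ₗ Iξ)) := by
    rw [pow_one, he1, he0, hnn]
  -- bracket computations
  have hbr2 : ∀ Z : 𝒜 ⊗[K] a →ₗ[𝒜] 𝒜 ⊗[K] b,
      br2 𝒜 i j prA prB δ Z = Pm ∘ₗ Z - Z ∘ₗ Sm := by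
    intro Z
    show pB ∘ₗ δ ∘ₗ jA ∘ₗ Z - Z ∘ₗ pA ∘ₗ δ ∘ₗ iA = Pm ∘ₗ Z - Z ∘ₗ Sm
    simp only [hPmdef, hSmdef, LinearMap.comp_assoc]
  have hbr3 : ∀ Z1 Z2 : 𝒜 ⊗[K] a →ₗ[𝒜] 𝒜 ⊗[K] b,
      br3 𝒜 i j prA δ Z1 Z2 = Z2 ∘ₗ (Qm ∘ₗ Z1) + Z1 ∘ₗ (Qm ∘ₗ Z2) := by
    intro Z1 Z2
    show Z2 ∘ₗ pA ∘ₗ δ ∘ₗ jA ∘ₗ Z1 + Z1 ∘ₗ pA ∘ₗ δ ∘ₗ jA ∘ₗ Z2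
      = Z2 ∘ₗ (Qm ∘ₗ Z1) + Z1 ∘ₗ (Qm ∘ₗ Z2)
    simp only [hQmdef, LinearMap.comp_assoc]
  have hcrec' : ∀ p, 1 ≤ p → e (p+1) = Pm ∘ₗ e p - e p ∘ₗ Sm + e p ∘ₗ (Qm ∘ₗ e 0)
      + e 0 ∘ₗ (Qm ∘ₗ e p)
      + ∑ r ∈ Finset.Ioo 0 p, (p.choose r) • (e r ∘ₗ (Qm ∘ₗ e (p-r))) := by
    intro p hp
    have hsum : ((algebraMap K 𝒜) ((2:K)⁻¹) •
          ∑ r ∈ Finset.Ioo 0 p,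
            (algebraMap K 𝒜 ((p.factorial : K) /
                ((r.factorial : K) * ((p - r).factorial : K)))) •
              br3 𝒜 i j prA δ (e r) (e (p - r)))
        = ∑ r ∈ Finset.Ioo 0 p, (p.choose r) • (e r ∘ₗ (Qm ∘ₗ e (p-r))) := by
      have hsum1 : (∑ r ∈ Finset.Ioo 0 p,
            (algebraMap K 𝒜 ((p.factorial : K) /
                ((r.factorial : K) * ((p - r).factorial : K)))) •
              br3 𝒜 i j prA δ (e r) (e (p - r)))
          = ∑ r ∈ Finset.Ioo 0 p, ((p.choose r) • (e (p-r) ∘ₗ (Qm ∘ₗ e r))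
              + (p.choose r) • (e r ∘ₗ (Qm ∘ₗ e (p-r)))) := by
        refine Finset.sum_congr rfl fun r hr => ?_
        simp only [Finset.mem_Ioo] at hr
        rw [hbr3, ← Nat.cast_choose K (by omega : r ≤ p), map_natCast,
          Nat.cast_smul_eq_nsmul, smul_add]
      rw [hsum1, Finset.sum_add_distrib]
      have hsym : (∑ r ∈ Finset.Ioo 0 p, (p.choose r) • (e (p-r) ∘ₗ (Qm ∘ₗ e r)))
          = ∑ r ∈ Finset.Ioo 0 p, (p.choose r) • (e r ∘ₗ (Qm ∘ₗ e (p-r))) := by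
        refine Finset.sum_nbij' (fun r => p - r) (fun r => p - r) ?_ ?_ ?_ ?_ ?_
        · intro r hr; simp only [Finset.mem_Ioo] at hr ⊢; omega
        · intro r hr; simp only [Finset.mem_Ioo] at hr ⊢; omega
        · intro r hr; simp only [Finset.mem_Ioo] at hr; omega
        · intro r hr; simp only [Finset.mem_Ioo] at hr; omega
        · intro r hr
          simp only [Finset.mem_Ioo] at hr
          rw [Nat.choose_symm (by omega : r ≤ p)]
          have h1 : p - (p - r) = r := by omega
          rw [h1]
      rw [hsym, ← two_smul ℕ, ← Nat.cast_smul_eq_nsmul 𝒜 2, smul_smul]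
      have h2 : ((2:ℕ) : 𝒜) = algebraMap K 𝒜 (2:K) := by
        rw [map_ofNat]
        norm_num
      rw [h2, ← map_mul, inv_mul_cancel₀ (two_ne_zero), map_one, one_smul]
    rw [herec p hp, hbr2, hbr3, hxi, hsum]
    simp only [myCompNeg, myNegComp]
    abel
  exact step_lemma e (fun k => pA ∘ₗ ((δ^k) ∘ₗ Iξ)) (fun k => pB ∘ₗ ((δ^k) ∘ₗ Iξ))
    Sm Qm Pm Rm hXrec hYrec hX0' hY0' he1' hcrec'
end
end
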